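/- arXiv:2504.05022 — 4 statements merged into one kernel-verified Lean document; each statement's English description precedes it below -/
import Mathlib

section
/- Let μ and ν be probability measures on ℝ^d such that μ is absolutely continuous with respect to the Lebesgue measure and ν has finite second moment. If φ₁ and φ₂ are convex functions on ℝ^d whose gradient maps both push μ forward to ν (i.e. (∇φ₁)_#μ = ν and (∇φ₂)_#μ = ν), then ∇φ₁ = ∇φ₂ μ-almost everywhere. -/
open MeasureTheory RealInnerProductSpace Set

section BrenierAux

set_option linter.unusedSectionVars false

variable {E : Type*} [NormedAddCommGroup E] [InnerProductSpace ℝ E]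

section Grad
variable [CompleteSpace E]


lemma hasDerivAt_line {f : E → ℝ} {p x : E} (hx : HasGradientAt f p x) (v : E) :
    HasDerivAt (fun t : ℝ => f (x + t • v)) ⟪p, v⟫ 0 := by
  have hL : HasDerivAt (fun t : ℝ => x + t • v) v 0 := by
    simpa using ((hasDerivAt_id (0:ℝ)).smul_const v).const_add x
  have hf := hx.hasFDerivAt
  rw [show x = x + (0:ℝ) • v by simp] at hf
  have := hf.comp_hasDerivAt (0:ℝ) hL
  simpa [InnerProductSpace.toDual_apply_apply, Function.comp_def] using this

/-- Fenchel–Young equality / gradient is a subgradient. -/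
lemma convex_subgrad {f : E → ℝ} (hf : ConvexOn ℝ univ f) {p x : E} (hx : HasGradientAt f p x)
    (x' : E) : f x + ⟪p, x' - x⟫ ≤ f x' := by
  have hd := hasDerivAt_line hx (x' - x)
  have hc : ConvexOn ℝ univ (fun t : ℝ => f (x + t • (x' - x))) := by
    have h := hf.comp_affineMap (AffineMap.lineMap x x' : ℝ →ᵃ[ℝ] E)
    have he : (f ∘ (AffineMap.lineMap x x' : ℝ →ᵃ[ℝ] E)) = fun t : ℝ => f (x + t • (x' - x)) := by
      funext t
      simp [Function.comp, AffineMap.lineMap_apply, vsub_eq_sub, vadd_eq_add, add_comm]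
    have hs : ((AffineMap.lineMap x x' : ℝ →ᵃ[ℝ] E) ⁻¹' univ) = (univ : Set ℝ) := by simp
    rw [he, hs] at h
    exact h
  have key := hc.le_slope_of_hasDerivAt (mem_univ (0:ℝ)) (mem_univ (1:ℝ)) one_pos hd
  rw [slope_def_field] at key
  simp only [one_smul, zero_smul, add_zero, sub_zero, div_one] at key
  have : x + (x' - x) = x' := by abel
  rw [this] at key
  linarith

/-- A global subgradient at a differentiability point is the gradient. -/
lemma subgrad_eq_grad {f : E → ℝ} {p x y : E} (hx : HasGradientAt f p x)
    (hy : ∀ x', f x + ⟪y, x' - x⟫ ≤ f x') : y = p := by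
  have key : ∀ v : E, ⟪y, v⟫ ≤ ⟪p, v⟫ := by
    intro v
    have hd := hasDerivAt_line hx v
    rw [hasDerivAt_iff_tendsto_slope] at hd
    have hd' := hd.mono_left (nhdsWithin_mono (0:ℝ) (fun t (ht : t ∈ Ioi (0:ℝ)) => ne_of_gt ht))
    refine ge_of_tendsto hd' ?_
    filter_upwards [self_mem_nhdsWithin] with t (ht : (0:ℝ) < t)
    have h1 := hy (x + t • v)
    have h2 : ⟪y, x + t • v - x⟫ = t * ⟪y, v⟫ := by
      rw [add_sub_cancel_left, real_inner_smul_right]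
    rw [h2] at h1
    rw [slope_def_field, sub_zero, le_div_iff₀ ht]
    simp only [zero_smul, add_zero]
    nlinarith
  have h0 : ⟪y - p, y - p⟫ ≤ 0 := by
    have := key (y - p)
    rw [inner_sub_left] at *
    linarith [key (y - p)]
  have := real_inner_self_nonpos.1 h0
  exact sub_eq_zero.1 this

end Grad

section Conj
variable [MeasurableSpace E] [OpensMeasurableSpace E]

/-- The convex conjugate, as an `EReal`-valued function. -/
noncomputable def conjE (f : E → ℝ) : E → EReal :=
  fun y => ⨆ x' : E, ((⟪x', y⟫ - f x' : ℝ) : EReal)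

lemma conjE_meas (f : E → ℝ) : Measurable (conjE f) := by
  apply LowerSemicontinuous.measurable
  apply lowerSemicontinuous_iSup
  intro x'
  apply Continuous.lowerSemicontinuous
  exact continuous_coe_real_ereal.comp ((continuous_const.inner continuous_id).sub continuous_const)

lemma conjE_lb (f : E → ℝ) (y x' : E) : ((⟪x', y⟫ - f x' : ℝ) : EReal) ≤ conjE f y :=
  le_iSup (fun x' => ((⟪x', y⟫ - f x' : ℝ) : EReal)) x'

lemma conjE_ne_bot (f : E → ℝ) (y : E) : conjE f y ≠ ⊥ :=
  ((EReal.bot_lt_coe _).trans_le (conjE_lb f y 0)).ne'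

variable [CompleteSpace E]

lemma conjE_grad {f : E → ℝ} (hf : ConvexOn ℝ univ f) {p x : E} (hx : HasGradientAt f p x) :
    conjE f p = ((⟪x, p⟫ - f x : ℝ) : EReal) := by
  refine le_antisymm (iSup_le fun x' => ?_) (conjE_lb f p x)
  rw [EReal.coe_le_coe_iff]
  have h := convex_subgrad hf hx x'
  have h2 : ⟪p, x' - x⟫ = ⟪x', p⟫ - ⟪x, p⟫ := by
    rw [inner_sub_right, real_inner_comm p x', real_inner_comm p x]
  linarith

end Conj
section rad
variable {E : Type*} [NormedAddCommGroup E] [NormedSpace ℝ E]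
  [MeasurableSpace E] [BorelSpace E] [FiniteDimensional ℝ E]
  [SecondCountableTopology E]
  {μ : Measure E} [μ.IsAddHaarMeasure]

lemma LocallyLipschitz.ae_differentiableAt' {f : E → ℝ} (hf : LocallyLipschitz f) :
    ∀ᵐ x ∂μ, DifferentiableAt ℝ f x := by
  choose K t ht hK using hf
  obtain ⟨T, hTc, hTu⟩ :=
    TopologicalSpace.isOpen_iUnion_countable (fun x => interior (t x)) (fun x => isOpen_interior)
  have hTcov : (⋃ i ∈ T, interior (t i)) = univ := by
    rw [hTu]
    apply eq_univ_of_forall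
    intro z
    exact mem_iUnion.2 ⟨z, mem_interior_iff_mem_nhds.2 (ht z)⟩
  have hae : ∀ i : T, ∀ᵐ z ∂μ, z ∈ interior (t (i : E)) → DifferentiableAt ℝ f z := by
    intro i
    have h1 := ((hK (i : E)).mono interior_subset).ae_differentiableWithinAt_of_mem (μ := μ)
    filter_upwards [h1] with z hz hzi
    exact (hz hzi).differentiableAt (isOpen_interior.mem_nhds hzi)
  have hTc' : Countable T := hTc.to_subtype
  filter_upwards [ae_all_iff.2 hae] with z hz
  have : z ∈ ⋃ i ∈ T, interior (t i) := hTcov ▸ mem_univ z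
  obtain ⟨i, hiT, hzi⟩ := mem_iUnion₂.1 this
  exact hz ⟨i, hiT⟩ hzi

end rad

section law
variable {α : Type*} [MeasurableSpace α]

lemma ae_eq_of_map_eq_of_ae_le {μ : Measure α} [IsFiniteMeasure μ] {X Y : α → EReal}
    (hX : Measurable X) (hY : Measurable Y) (hle : ∀ᵐ x ∂μ, X x ≤ Y x)
    (hlaw : μ.map X = μ.map Y) : ∀ᵐ x ∂μ, X x = Y x := by
  have hq : ∀ q : ℚ, μ (X ⁻¹' Iic ((q : ℝ) : EReal) \ Y ⁻¹' Iic ((q : ℝ) : EReal)) = 0 := by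
    intro q
    set A := X ⁻¹' Iic ((q : ℝ) : EReal) with hA
    set B := Y ⁻¹' Iic ((q : ℝ) : EReal) with hB
    have hAm : MeasurableSet A := hX measurableSet_Iic
    have hBm : MeasurableSet B := hY measurableSet_Iic
    have hABeq : μ A = μ B := by
      rw [hA, hB, ← Measure.map_apply hX measurableSet_Iic, ← Measure.map_apply hY measurableSet_Iic,
        hlaw]
    have hBA : μ (B \ A) = 0 := by
      have hsub : B \ A ⊆ {x | ¬ X x ≤ Y x} := by
        intro x hx
        simp only [hB, hA, mem_diff, mem_preimage, mem_Iic, not_le] at hx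
        intro hxy
        exact absurd (le_trans hxy hx.1) (not_le.2 hx.2)
      exact measure_mono_null hsub (ae_iff.1 hle)
    have h1 : μ (B ∩ A) + μ (B \ A) = μ B := measure_inter_add_diff B hAm
    have h2 : μ (A ∩ B) + μ (A \ B) = μ A := measure_inter_add_diff A hBm
    have h3 : μ (A ∩ B) = μ A := by
      rw [inter_comm]
      rw [hBA, add_zero] at h1
      rw [h1, hABeq]
    rw [h3] at h2
    have := measure_ne_top μ A
    nth_rewrite 2 [← add_zero (μ A)] at h2
    exact ((ENNReal.add_right_inj this).1 h2)
  have hlt : μ {x | X x < Y x} = 0 := by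
    have hsub : {x | X x < Y x} ⊆ ⋃ q : ℚ, (X ⁻¹' Iic ((q : ℝ) : EReal) \ Y ⁻¹' Iic ((q : ℝ) : EReal)) := by
      intro x hx
      obtain ⟨q, hq1, hq2⟩ := EReal.lt_iff_exists_rat_btwn.1 hx
      exact mem_iUnion.2 ⟨q, ⟨le_of_lt hq1, not_le.2 hq2⟩⟩
    exact measure_mono_null hsub (by rw [measure_iUnion_null_iff]; exact fun q => hq q)
  have hnlt : ∀ᵐ x ∂μ, ¬ X x < Y x := by
    rw [ae_iff]
    simpa using hlt
  filter_upwards [hle, hnlt] with x h1 h2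
  exact le_antisymm h1 (not_lt.1 h2)

end law

end BrenierAux

/-- **Uniqueness part of Brenier's theorem (1991).**
Let `μ` and `ν` be probability measures on `ℝ^d` such that `μ` is absolutely continuous
with respect to the Lebesgue measure and `ν` has finite second moment.  If `φ₁` and `φ₂`
are convex functions on `ℝ^d` whose gradient maps both push `μ` forward to `ν`, then
`∇φ₁ = ∇φ₂` `μ`-almost everywhere. -/
theorem brenier_uniqueness (d : ℕ) (μ ν : Measure (EuclideanSpace ℝ (Fin d)))
    [IsProbabilityMeasure μ] [IsProbabilityMeasure ν]
    (hμ : μ ≪ volume)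
    (hν : Integrable (fun y => ‖y‖ ^ 2) ν)
    (φ₁ φ₂ : EuclideanSpace ℝ (Fin d) → ℝ)
    (hφ₁ : ConvexOn ℝ Set.univ φ₁) (hφ₂ : ConvexOn ℝ Set.univ φ₂)
    (hmap₁ : μ.map (gradient φ₁) = ν) (hmap₂ : μ.map (gradient φ₂) = ν) :
    ∀ᵐ x ∂μ, gradient φ₁ x = gradient φ₂ x := by
  classical
  -- a.e. differentiability
  have hdf : ∀ᵐ x ∂μ, DifferentiableAt ℝ φ₁ x :=
    (hφ₁.locallyLipschitz.ae_differentiableAt').filter_mono hμ.ae_le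
  have hdg : ∀ᵐ x ∂μ, DifferentiableAt ℝ φ₂ x :=
    (hφ₂.locallyLipschitz.ae_differentiableAt').filter_mono hμ.ae_le
  set V : EuclideanSpace ℝ (Fin d) → EReal := conjE φ₁ with hVdef
  set W : EuclideanSpace ℝ (Fin d) → EReal := conjE φ₂ with hWdef
  have hVm : Measurable V := conjE_meas φ₁
  have hWm : Measurable W := conjE_meas φ₂
  set Z : EuclideanSpace ℝ (Fin d) → EReal := fun y =>
    if W y = ⊤ then (⊥ : EReal) else if V y = ⊤ then (⊤ : EReal)
      else (((V y).toReal - (W y).toReal : ℝ) : EReal) with hZdef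
  have hZ : Measurable Z := by
    refine Measurable.ite (hWm (measurableSet_singleton ⊤)) measurable_const ?_
    refine Measurable.ite (hVm (measurableSet_singleton ⊤)) measurable_const ?_
    exact (hVm.ereal_toReal.sub hWm.ereal_toReal).coe_real_ereal
  have hgm₁ : Measurable (gradient φ₁) := by
    have : gradient φ₁ = fun x => (InnerProductSpace.toDual ℝ (EuclideanSpace ℝ (Fin d))).symm (fderiv ℝ φ₁ x) := rfl
    rw [this]
    exact (LinearIsometryEquiv.continuous _).measurable.comp (measurable_fderiv ℝ φ₁)
  have hgm₂ : Measurable (gradient φ₂) := by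
    have : gradient φ₂ = fun x => (InnerProductSpace.toDual ℝ (EuclideanSpace ℝ (Fin d))).symm (fderiv ℝ φ₂ x) := rfl
    rw [this]
    exact (LinearIsometryEquiv.continuous _).measurable.comp (measurable_fderiv ℝ φ₂)
  set X : EuclideanSpace ℝ (Fin d) → EReal := fun x => Z (gradient φ₁ x) with hXdef
  set Y : EuclideanSpace ℝ (Fin d) → EReal := fun x => Z (gradient φ₂ x) with hYdef
  have hXm : Measurable X := hZ.comp hgm₁
  have hYm : Measurable Y := hZ.comp hgm₂
  have hlaw : μ.map X = μ.map Y := by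
    have h1 : μ.map X = ν.map Z := by
      rw [← hmap₁, Measure.map_map hZ hgm₁]; rfl
    have h2 : μ.map Y = ν.map Z := by
      rw [← hmap₂, Measure.map_map hZ hgm₂]; rfl
    rw [h1, h2]
  -- pointwise claims
  have claim1 : ∀ x : EuclideanSpace ℝ (Fin d), DifferentiableAt ℝ φ₁ x → X x ≤ ((φ₂ x - φ₁ x : ℝ) : EReal) := by
    intro x h1
    have hpf := h1.hasGradientAt
    set pf := gradient φ₁ x
    have hVf : V pf = ((⟪x, pf⟫ - φ₁ x : ℝ) : EReal) := conjE_grad hφ₁ hpf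
    show Z pf ≤ _
    by_cases hWt : W pf = ⊤
    · simp only [hZdef, if_pos hWt]; exact bot_le
    · have hWb : W pf ≠ ⊥ := conjE_ne_bot φ₂ pf
      have hVt : V pf ≠ ⊤ := by rw [hVf]; exact EReal.coe_ne_top _
      simp only [hZdef, if_neg hWt, if_neg hVt]
      rw [EReal.coe_le_coe_iff]
      have e1 : (V pf).toReal = ⟪x, pf⟫ - φ₁ x := by rw [hVf]; exact EReal.toReal_coe _
      have e2 : ⟪x, pf⟫ - φ₂ x ≤ (W pf).toReal := by
        have h := conjE_lb φ₂ pf x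
        rw [← hWdef, ← EReal.coe_toReal hWt hWb, EReal.coe_le_coe_iff] at h
        exact h
      rw [e1]; linarith
  have claim2 : ∀ x : EuclideanSpace ℝ (Fin d), DifferentiableAt ℝ φ₂ x → ((φ₂ x - φ₁ x : ℝ) : EReal) ≤ Y x := by
    intro x h2
    have hpg := h2.hasGradientAt
    set pg := gradient φ₂ x
    have hWg : W pg = ((⟪x, pg⟫ - φ₂ x : ℝ) : EReal) := conjE_grad hφ₂ hpg
    show _ ≤ Z pg
    have hWt : W pg ≠ ⊤ := by rw [hWg]; exact EReal.coe_ne_top _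
    by_cases hVt : V pg = ⊤
    · simp only [hZdef, if_neg hWt, if_pos hVt]; exact le_top
    · have hVb : V pg ≠ ⊥ := conjE_ne_bot φ₁ pg
      simp only [hZdef, if_neg hWt, if_neg hVt]
      rw [EReal.coe_le_coe_iff]
      have e1 : (W pg).toReal = ⟪x, pg⟫ - φ₂ x := by rw [hWg]; exact EReal.toReal_coe _
      have e2 : ⟪x, pg⟫ - φ₁ x ≤ (V pg).toReal := by
        have h := conjE_lb φ₁ pg x
        rw [← hVdef, ← EReal.coe_toReal hVt hVb, EReal.coe_le_coe_iff] at h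
        exact h
      rw [e1]; linarith
  have hle : ∀ᵐ x ∂μ, X x ≤ Y x := by
    filter_upwards [hdf, hdg] with x h1 h2
    exact (claim1 x h1).trans (claim2 x h2)
  have heq := ae_eq_of_map_eq_of_ae_le hXm hYm hle hlaw
  filter_upwards [hdf, hdg, heq] with x h1 h2 h3
  have hpf := h1.hasGradientAt
  have hpg := h2.hasGradientAt
  set pf := gradient φ₁ x
  set pg := gradient φ₂ x
  -- Y x equals the middle value
  have hYx : Y x = ((φ₂ x - φ₁ x : ℝ) : EReal) :=
    le_antisymm (h3 ▸ claim1 x h1) (claim2 x h2)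
  -- extract equality in Young's inequality at pg
  have hWg : W pg = ((⟪x, pg⟫ - φ₂ x : ℝ) : EReal) := conjE_grad hφ₂ hpg
  have hWt : W pg ≠ ⊤ := by rw [hWg]; exact EReal.coe_ne_top _
  have hVb : V pg ≠ ⊥ := conjE_ne_bot φ₁ pg
  have hVt : V pg ≠ ⊤ := by
    intro hV
    rw [hYdef] at hYx
    simp only [hZdef] at hYx
    rw [if_neg hWt, if_pos hV] at hYx
    exact (EReal.coe_ne_top _) hYx.symm
  have hYx' : (V pg).toReal - (W pg).toReal = φ₂ x - φ₁ x := by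
    rw [hYdef] at hYx
    simp only [hZdef] at hYx
    rw [if_neg hWt, if_neg hVt] at hYx
    exact_mod_cast hYx
  have e1 : (W pg).toReal = ⟪x, pg⟫ - φ₂ x := by rw [hWg]; exact EReal.toReal_coe _
  have hVg : V pg = ((⟪x, pg⟫ - φ₁ x : ℝ) : EReal) := by
    rw [← EReal.coe_toReal hVt hVb]
    congr 1
    rw [e1] at hYx'
    linarith
  -- pg is a subgradient of φ₁ at x
  have hsub : ∀ x', φ₁ x + ⟪pg, x' - x⟫ ≤ φ₁ x' := by
    intro x'
    have h := conjE_lb φ₁ pg x'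
    rw [← hVdef, hVg, EReal.coe_le_coe_iff] at h
    have h2 : ⟪pg, x' - x⟫ = ⟪x', pg⟫ - ⟪x, pg⟫ := by
      rw [inner_sub_right, real_inner_comm pg x', real_inner_comm pg x]
    rw [h2]; linarith
  exact (subgrad_eq_grad hpf hsub).symm
end

section
/- Let μ and ν be probability measures on ℝ^d, each with finite second moment, with μ absolutely continuous with respect to the Lebesgue measure, and let φ : ℝ^d → ℝ be a convex function whose gradient map pushes μ forward to ν. Then ∇φ is an optimal transport map for the quadratic cost: for every measurable map T : ℝ^d → ℝ^d with T_#μ = ν one has ∫ ‖x − ∇φ(x)‖² dμ(x) ≤ ∫ ‖x − T(x)‖² dμ(x). -/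
open MeasureTheory Metric
open scoped RealInnerProductSpace

section Aux
variable {E : Type*} [NormedAddCommGroup E] [InnerProductSpace ℝ E] [CompleteSpace E]

/-- The gradient of a convex function is a subgradient. -/
lemma brenier_aux_subgrad (φ : E → ℝ) (hφ : ConvexOn ℝ Set.univ φ) {x g : E}
    (hg : HasGradientAt φ g x) (z : E) : φ x + ⟪g, z - x⟫ ≤ φ z := by
  rcases eq_or_ne z x with rfl | hzx
  · simp
  set ψ : ℝ → ℝ := φ ∘ (AffineMap.lineMap x z) with hψ
  have hconv : ConvexOn ℝ Set.univ ψ := by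
    have := hφ.comp_affineMap (AffineMap.lineMap x z : ℝ →ᵃ[ℝ] E)
    simpa using this
  have hline : HasDerivAt (fun t : ℝ => AffineMap.lineMap x z t) (z - x) 0 := by
    simp only [AffineMap.lineMap_apply_module]
    have h1 : HasDerivAt (fun t : ℝ => (1 - t) • x + t • z) ((-1 : ℝ) • x + (1 : ℝ) • z) 0 :=
      (((hasDerivAt_id (0:ℝ)).const_sub 1).smul_const x).add ((hasDerivAt_id (0:ℝ)).smul_const z)
    simpa [neg_add_eq_sub] using h1
  have hcomp : HasDerivAt ψ ⟪g, z - x⟫ 0 := by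
    have h1 : HasFDerivAt φ (InnerProductSpace.toDual ℝ E g) (AffineMap.lineMap x z (0:ℝ)) := by
      simpa using hg.hasFDerivAt
    simpa using (h1.comp_hasDerivAt 0 hline)
  have := hconv.le_slope_of_hasDerivAt (Set.mem_univ (0:ℝ)) (Set.mem_univ 1) one_pos hcomp
  rw [slope_def_field] at this
  simp [ψ] at this
  linarith

end Aux

set_option maxHeartbeats 1000000 in
/-- **Optimality part of Brenier's theorem (1991).**
Let `μ` and `ν` be probability measures on `ℝ^d`, each with finite second moment, with `μ`
absolutely continuous with respect to the Lebesgue measure, and let `φ : ℝ^d → ℝ` be a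
convex function whose gradient map pushes `μ` forward to `ν`.  Then `∇φ` is an optimal
transport map for the quadratic cost: for every measurable map `T : ℝ^d → ℝ^d` with
`T_# μ = ν` one has `∫ ‖x − ∇φ(x)‖² dμ ≤ ∫ ‖x − T(x)‖² dμ`. -/
theorem brenier_optimality (d : ℕ) (μ ν : Measure (EuclideanSpace ℝ (Fin d)))
    [IsProbabilityMeasure μ] [IsProbabilityMeasure ν]
    (hμ : μ ≪ volume)
    (hμ2 : Integrable (fun x => ‖x‖ ^ 2) μ)
    (hν2 : Integrable (fun y => ‖y‖ ^ 2) ν)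
    (φ : EuclideanSpace ℝ (Fin d) → ℝ)
    (hφ : ConvexOn ℝ Set.univ φ)
    (hmap : μ.map (gradient φ) = ν) :
    ∀ T : EuclideanSpace ℝ (Fin d) → EuclideanSpace ℝ (Fin d),
      Measurable T → μ.map T = ν →
        ∫ x, ‖x - gradient φ x‖ ^ 2 ∂μ ≤ ∫ x, ‖x - T x‖ ^ 2 ∂μ := by
  intro T hT hTmap
  set G := gradient φ with hG
  -- basic facts
  have hcont : Continuous φ := by
    rw [← continuousOn_univ]; exact hφ.continuousOn isOpen_univ
  have hGmeas : Measurable G := by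
    rw [hG]; unfold gradient
    exact (LinearIsometryEquiv.continuous _).measurable.comp (measurable_fderiv ℝ φ)
  -- a.e. differentiability
  have haevol : ∀ᵐ x ∂(volume : Measure (EuclideanSpace ℝ (Fin d))), DifferentiableAt ℝ φ x := by
    have key : ∀ n : ℕ, ∀ᵐ x ∂(volume : Measure (EuclideanSpace ℝ (Fin d))),
        x ∈ ball (0 : EuclideanSpace ℝ (Fin d)) (n + 1) → DifferentiableAt ℝ φ x := by
      intro n
      have hb : ConvexOn ℝ (ball (0 : EuclideanSpace ℝ (Fin d)) (n + 2)) φ :=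
        hφ.subset (Set.subset_univ _) (convex_ball _ _)
      have him : Bornology.IsBounded (φ '' ball (0 : EuclideanSpace ℝ (Fin d)) (n + 2)) := by
        refine (((isCompact_closedBall (0:EuclideanSpace ℝ (Fin d)) (n+2)).image
          hcont)).isBounded.subset ?_
        exact Set.image_mono ball_subset_closedBall
      obtain ⟨K, hK⟩ := hb.exists_lipschitzOnWith_of_isBounded (by linarith : (n:ℝ) + 1 < n + 2) him
      filter_upwards [hK.ae_differentiableWithinAt_of_mem] with x hx hxball
      exact (hx hxball).differentiableAt (isOpen_ball.mem_nhds hxball)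
    rw [← ae_all_iff] at key
    filter_upwards [key] with x hx
    obtain ⟨n, hn⟩ := exists_nat_gt ‖x‖
    exact hx n (by simpa [mem_ball, dist_zero_right] using hn.trans (by linarith))
  have hgrad : ∀ᵐ x ∂μ, HasGradientAt φ (G x) x := by
    filter_upwards [hμ.ae_le haevol] with x hx
    exact hx.hasGradientAt
  -- dense sequence and Legendre transform
  have : Nonempty (EuclideanSpace ℝ (Fin d)) := ⟨0⟩
  set u : ℕ → EuclideanSpace ℝ (Fin d) := TopologicalSpace.denseSeq _ with hu
  have hud : DenseRange u := TopologicalSpace.denseRange_denseSeq _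
  set g : ℕ → EuclideanSpace ℝ (Fin d) → ℝ := fun n y => ⟪u n, y⟫ - φ (u n) with hgdef
  have hgmeas : ∀ n, Measurable (g n) := fun n =>
    ((measurable_const.inner measurable_id).sub measurable_const)
  set h : EuclideanSpace ℝ (Fin d) → ℝ := fun y => ⨆ n, g n y with hhdef
  have hhmeas : Measurable h := Measurable.iSup hgmeas
  set B : Set (EuclideanSpace ℝ (Fin d)) := {y | BddAbove (Set.range fun n => g n y)} with hBdef
  have hBmeas : MeasurableSet B := measurableSet_bddAbove_range hgmeas
  -- K1: Fenchel-Young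
  have K1 : ∀ x y, y ∈ B → ⟪x, y⟫ - φ x ≤ h y := by
    intro x y hy
    have hle : ∀ n, g n y ≤ h y := fun n => le_ciSup hy n
    have hclosed : IsClosed {z : EuclideanSpace ℝ (Fin d) | ⟪z, y⟫ - φ z ≤ h y} :=
      isClosed_le (Continuous.sub (continuous_id.inner continuous_const) hcont) continuous_const
    have hsub : Set.range u ⊆ {z | ⟪z, y⟫ - φ z ≤ h y} := by
      rintro _ ⟨n, rfl⟩; exact hle n
    have : (Set.univ : Set (EuclideanSpace ℝ (Fin d))) ⊆ {z | ⟪z, y⟫ - φ z ≤ h y} := by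
      rw [← hud.closure_range]
      exact closure_minimal hsub hclosed
    exact this (Set.mem_univ x)
  -- K2: Fenchel equality at differentiability points
  have K2 : ∀ x : EuclideanSpace ℝ (Fin d), HasGradientAt φ (G x) x →
      G x ∈ B ∧ h (G x) = ⟪x, G x⟫ - φ x := by
    intro x hx
    have hub : ∀ n, g n (G x) ≤ ⟪x, G x⟫ - φ x := by
      intro n
      have hs := brenier_aux_subgrad φ hφ hx (u n)
      have hinner : ⟪G x, u n - x⟫ = ⟪u n, G x⟫ - ⟪x, G x⟫ := by
        rw [inner_sub_right, real_inner_comm (G x) (u n), real_inner_comm (G x) x]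
      simp only [hgdef]
      rw [hinner] at hs
      linarith
    have hmemB : G x ∈ B := ⟨⟪x, G x⟫ - φ x, by rintro _ ⟨n, rfl⟩; exact hub n⟩
    refine ⟨hmemB, le_antisymm (ciSup_le hub) ?_⟩
    exact K1 x (G x) hmemB
  -- measure facts
  have hGBae : ∀ᵐ x ∂μ, G x ∈ B := by
    filter_upwards [hgrad] with x hx; exact (K2 x hx).1
  have hνBc : ν Bᶜ = 0 := by
    rw [← hmap, Measure.map_apply hGmeas hBmeas.compl]
    exact ae_iff.mp hGBae
  have hTBae : ∀ᵐ x ∂μ, T x ∈ B := by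
    have : μ (T ⁻¹' Bᶜ) = 0 := by
      rw [← Measure.map_apply hT hBmeas.compl, hTmap]; exact hνBc
    exact ae_iff.mpr this
  -- integrability
  have hT2 : Integrable (fun x => ‖T x‖ ^ 2) μ := by
    have h1 : Integrable (fun y => ‖y‖ ^ 2) (μ.map T) := by rw [hTmap]; exact hν2
    have := (integrable_map_measure h1.1 hT.aemeasurable).mp h1
    simpa [Function.comp_def] using this
  have hG2 : Integrable (fun x => ‖G x‖ ^ 2) μ := by
    have h1 : Integrable (fun y => ‖y‖ ^ 2) (μ.map G) := by rw [hmap]; exact hν2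
    have := (integrable_map_measure h1.1 hGmeas.aemeasurable).mp h1
    simpa [Function.comp_def] using this
  have hinner_int : ∀ (S : EuclideanSpace ℝ (Fin d) → EuclideanSpace ℝ (Fin d)),
      Measurable S → Integrable (fun x => ‖S x‖ ^ 2) μ → Integrable (fun x => ⟪x, S x⟫) μ := by
    intro S hS hS2
    have hsum : Integrable (fun x => ‖x‖ ^ 2 + ‖S x‖ ^ 2) μ := hμ2.add hS2
    refine Integrable.mono hsum ?_ ?_
    · exact (measurable_id.inner hS).aestronglyMeasurable
    · filter_upwards with x
      have h1 : |⟪x, S x⟫| ≤ ‖x‖ * ‖S x‖ := abs_real_inner_le_norm x (S x)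
      have h2 : (0:ℝ) ≤ ‖x‖ ^ 2 + ‖S x‖ ^ 2 := by positivity
      rw [Real.norm_eq_abs, Real.norm_eq_abs, abs_of_nonneg h2]
      nlinarith [norm_nonneg x, norm_nonneg (S x)]
  have hxT : Integrable (fun x => ⟪x, T x⟫) μ := hinner_int T hT hT2
  have hxG : Integrable (fun x => ⟪x, G x⟫) μ := hinner_int G hGmeas hG2
  have hx1 : Integrable (fun x : EuclideanSpace ℝ (Fin d) => ‖x‖) μ := by
    have hsum : Integrable (fun x : EuclideanSpace ℝ (Fin d) => 1 + ‖x‖ ^ 2) μ :=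
      (integrable_const (1:ℝ)).add hμ2
    refine Integrable.mono hsum measurable_norm.aestronglyMeasurable ?_
    filter_upwards with x
    have := norm_nonneg x
    rw [Real.norm_eq_abs, abs_of_nonneg this, Real.norm_eq_abs, abs_of_nonneg (by positivity)]
    nlinarith
  have hG1 : Integrable (fun x => ‖G x‖) μ := by
    have hsum : Integrable (fun x => 1 + ‖G x‖ ^ 2) μ := (integrable_const (1:ℝ)).add hG2
    refine Integrable.mono hsum hGmeas.norm.aestronglyMeasurable ?_
    filter_upwards with x
    have := norm_nonneg (G x)
    rw [Real.norm_eq_abs, abs_of_nonneg this, Real.norm_eq_abs, abs_of_nonneg (by positivity)]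
    nlinarith
  -- φ is integrable
  obtain ⟨x₀, hx₀⟩ : ∃ x₀, HasGradientAt φ (G x₀) x₀ := by
    have : Filter.NeBot (ae μ) := ae_neBot.mpr (IsProbabilityMeasure.ne_zero μ)
    exact hgrad.exists
  have hφint : Integrable φ μ := by
    set b : EuclideanSpace ℝ (Fin d) → ℝ := fun x =>
      (|⟪x, G x⟫| + ‖u 0‖ * ‖G x‖ + |φ (u 0)|) + (|φ x₀| + ‖G x₀‖ * ‖x‖ + ‖G x₀‖ * ‖x₀‖) with hbdef
    have hbint : Integrable b μ := by
      refine Integrable.add (Integrable.add (Integrable.add hxG.abs ?_) (integrable_const _))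
        (Integrable.add (Integrable.add (integrable_const _) ?_) (integrable_const _))
      · exact hG1.const_mul _
      · exact hx1.const_mul _
    refine Integrable.mono hbint hcont.aestronglyMeasurable ?_
    filter_upwards [hgrad] with x hx
    have hupper : φ x ≤ ⟪x, G x⟫ - ⟪u 0, G x⟫ + φ (u 0) := by
      have heq := (K2 x hx).2
      have hle : g 0 (G x) ≤ h (G x) := le_ciSup (K2 x hx).1 0
      simp only [hgdef] at hle
      rw [heq] at hle
      linarith
    have hlower : φ x₀ + ⟪G x₀, x - x₀⟫ ≤ φ x := brenier_aux_subgrad φ hφ hx₀ x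
    have hbx : ‖b x‖ = b x := by
      rw [Real.norm_eq_abs]
      refine abs_of_nonneg ?_
      simp only [hbdef]
      positivity
    rw [Real.norm_eq_abs, hbx, abs_le]
    have h2 : ⟪G x₀, x - x₀⟫ = ⟪G x₀, x⟫ - ⟪G x₀, x₀⟫ := inner_sub_right _ _ _
    have h3 : |⟪G x₀, x⟫| ≤ ‖G x₀‖ * ‖x‖ := abs_real_inner_le_norm _ _
    have h4 : |⟪G x₀, x₀⟫| ≤ ‖G x₀‖ * ‖x₀‖ := abs_real_inner_le_norm _ _
    have h5 : -|φ x₀| ≤ φ x₀ := neg_abs_le _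
    have h6 : (0:ℝ) ≤ |⟪x, G x⟫| := abs_nonneg _
    have h7 : (0:ℝ) ≤ ‖u 0‖ * ‖G x‖ := by positivity
    have h8 : (0:ℝ) ≤ |φ (u 0)| := abs_nonneg _
    have h9 : |⟪u 0, G x⟫| ≤ ‖u 0‖ * ‖G x‖ := abs_real_inner_le_norm _ _
    have h10 : ⟪x, G x⟫ ≤ |⟪x, G x⟫| := le_abs_self _
    have h11 : φ (u 0) ≤ |φ (u 0)| := le_abs_self _
    have h12 : (0:ℝ) ≤ |φ x₀| := abs_nonneg _
    have h13 : (0:ℝ) ≤ ‖G x₀‖ * ‖x‖ := by positivity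
    have h14 : (0:ℝ) ≤ ‖G x₀‖ * ‖x₀‖ := by positivity
    rw [abs_le] at h3 h4 h9
    rw [h2] at hlower
    simp only [hbdef]
    constructor
    · linarith
    · linarith
  -- h ∘ G integrable
  have hhGae : (fun x => h (G x)) =ᵐ[μ] (fun x => ⟪x, G x⟫ - φ x) := by
    filter_upwards [hgrad] with x hx
    exact (K2 x hx).2
  have hhG : Integrable (fun x => h (G x)) μ := (hxG.sub hφint).congr hhGae.symm
  have hhν : Integrable h ν := by
    rw [← hmap]
    exact (integrable_map_measure (by rw [hmap]; exact hhmeas.aestronglyMeasurable)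
      hGmeas.aemeasurable).mpr hhG
  have hhT : Integrable (fun x => h (T x)) μ := by
    have h1 : Integrable h (μ.map T) := by rw [hTmap]; exact hhν
    have := (integrable_map_measure h1.1 hT.aemeasurable).mp h1
    simpa [Function.comp_def] using this
  -- key inequality
  have hintT : ∫ x, h (T x) ∂μ = ∫ y, h y ∂ν := by
    rw [← hTmap]
    exact (integral_map hT.aemeasurable
      (by rw [hTmap]; exact hhmeas.aestronglyMeasurable)).symm
  have hintG : ∫ x, h (G x) ∂μ = ∫ y, h y ∂ν := by
    rw [← hmap]
    exact (integral_map hGmeas.aemeasurable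
      (by rw [hmap]; exact hhmeas.aestronglyMeasurable)).symm
  have hkey : ∫ x, ⟪x, T x⟫ ∂μ ≤ ∫ x, ⟪x, G x⟫ ∂μ := by
    have step1 : ∫ x, ⟪x, T x⟫ ∂μ ≤ ∫ x, (φ x + h (T x)) ∂μ := by
      refine integral_mono_ae hxT (hφint.add hhT) ?_
      filter_upwards [hTBae] with x hx
      have := K1 x (T x) hx
      linarith
    have step2 : ∫ x, (φ x + h (T x)) ∂μ = ∫ x, (φ x + h (G x)) ∂μ := by
      rw [integral_add hφint hhT, integral_add hφint hhG, hintT, hintG]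
    have step3 : ∫ x, (φ x + h (G x)) ∂μ = ∫ x, ⟪x, G x⟫ ∂μ := by
      refine integral_congr_ae ?_
      filter_upwards [hgrad] with x hx
      have := (K2 x hx).2
      linarith
    linarith
  -- final computation
  have hnormT : ∫ x, ‖T x‖ ^ 2 ∂μ = ∫ y, ‖y‖ ^ 2 ∂ν := by
    rw [← hTmap]
    exact (integral_map hT.aemeasurable
      (by rw [hTmap]; exact hν2.1)).symm
  have hnormG : ∫ x, ‖G x‖ ^ 2 ∂μ = ∫ y, ‖y‖ ^ 2 ∂ν := by
    rw [← hmap]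
    exact (integral_map hGmeas.aemeasurable
      (by rw [hmap]; exact hν2.1)).symm
  have hexpand : ∀ (S : EuclideanSpace ℝ (Fin d) → EuclideanSpace ℝ (Fin d)),
      Integrable (fun x => ‖S x‖ ^ 2) μ → Integrable (fun x => ⟪x, S x⟫) μ →
      ∫ x, ‖x - S x‖ ^ 2 ∂μ
        = ∫ x, ‖x‖ ^ 2 ∂μ - 2 * ∫ x, ⟪x, S x⟫ ∂μ + ∫ x, ‖S x‖ ^ 2 ∂μ := by
    intro S hS2 hSi
    have : ∀ x, ‖x - S x‖ ^ 2 = ‖x‖ ^ 2 - 2 * ⟪x, S x⟫ + ‖S x‖ ^ 2 := by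
      intro x
      rw [@norm_sub_sq_real]
    simp_rw [this]
    have i2 : Integrable (fun x => 2 * ⟪x, S x⟫) μ := hSi.const_mul 2
    have i1 : Integrable (fun x => ‖x‖ ^ 2 - 2 * ⟪x, S x⟫) μ := hμ2.sub i2
    rw [integral_add i1 hS2, integral_sub hμ2 i2, MeasureTheory.integral_const_mul]
  rw [hexpand T hT2 hxT, hexpand G hG2 hxG, hnormT, hnormG]
  linarith
end

section
/- Let u : ℝ² → ℝ be defined on the region r = √(x² + y²) > 1 by u(x,y) = r·√(r² − 1) − ln(r + √(r² − 1)). Then at every point (x,y) with x² + y² > 1, u is twice continuously differentiable and its Hessian determinant satisfies det(D²u(x,y)) = 4. -/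
noncomputable def Gfun (t : ℝ) : ℝ :=
  Real.sqrt t * Real.sqrt (t - 1) - Real.log (Real.sqrt t + Real.sqrt (t - 1))

noncomputable def G1 (t : ℝ) : ℝ := Real.sqrt (t - 1) / Real.sqrt t

noncomputable def G2 (t : ℝ) : ℝ := 1 / (2 * t * Real.sqrt t * Real.sqrt (t - 1))

lemma hG {t : ℝ} (ht : 1 < t) : HasDerivAt Gfun (G1 t) t := by
  have h0 : (0:ℝ) < t := by linarith
  have h1 : (0:ℝ) < t - 1 := by linarith
  have ha : 0 < Real.sqrt t := Real.sqrt_pos.2 h0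
  have hb : 0 < Real.sqrt (t - 1) := Real.sqrt_pos.2 h1
  have ha2 : Real.sqrt t ^ 2 = t := Real.sq_sqrt h0.le
  have hb2 : Real.sqrt (t - 1) ^ 2 = t - 1 := Real.sq_sqrt h1.le
  have hda : HasDerivAt Real.sqrt (1 / (2 * Real.sqrt t)) t := Real.hasDerivAt_sqrt h0.ne'
  have hdb : HasDerivAt (fun s => Real.sqrt (s - 1)) (1 / (2 * Real.sqrt (t - 1))) t := by
    have := (Real.hasDerivAt_sqrt h1.ne').comp t ((hasDerivAt_id t).sub_const 1)
    simpa [Function.comp_def] using this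
  have hsum : HasDerivAt (fun s => Real.sqrt s + Real.sqrt (s - 1))
      (1 / (2 * Real.sqrt t) + 1 / (2 * Real.sqrt (t - 1))) t := hda.add hdb
  have hpos : Real.sqrt t + Real.sqrt (t - 1) ≠ 0 := by positivity
  have hlog := (Real.hasDerivAt_log hpos).comp t hsum
  have hmul := hda.mul hdb
  have := hmul.sub hlog
  refine this.congr_deriv (Eq.symm ?_)
  set a := Real.sqrt t
  set b := Real.sqrt (t - 1)
  show b / a = _
  field_simp
  linear_combination (a+b)*hb2 - (a+b)*ha2

lemma hG1 {t : ℝ} (ht : 1 < t) : HasDerivAt G1 (G2 t) t := by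
  have h0 : (0:ℝ) < t := by linarith
  have h1 : (0:ℝ) < t - 1 := by linarith
  have ha : 0 < Real.sqrt t := Real.sqrt_pos.2 h0
  have hb : 0 < Real.sqrt (t - 1) := Real.sqrt_pos.2 h1
  have ha2 : Real.sqrt t ^ 2 = t := Real.sq_sqrt h0.le
  have hb2 : Real.sqrt (t - 1) ^ 2 = t - 1 := Real.sq_sqrt h1.le
  have hda : HasDerivAt Real.sqrt (1 / (2 * Real.sqrt t)) t := Real.hasDerivAt_sqrt h0.ne'
  have hdb : HasDerivAt (fun s => Real.sqrt (s - 1)) (1 / (2 * Real.sqrt (t - 1))) t := by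
    have := (Real.hasDerivAt_sqrt h1.ne').comp t ((hasDerivAt_id t).sub_const 1)
    simpa [Function.comp_def] using this
  have := hdb.div hda ha.ne'
  refine this.congr_deriv (Eq.symm ?_)
  set a := Real.sqrt t
  set b := Real.sqrt (t - 1)
  show 1 / (2 * t * a * b) = _
  field_simp
  linear_combination (1 - t) * ha2 + t * hb2

lemma hGsmooth {t : ℝ} (ht : 1 < t) : ContDiffAt ℝ 2 Gfun t := by
  have h0 : (0:ℝ) < t := by linarith
  have h1 : (0:ℝ) < t - 1 := by linarith
  have ha : 0 < Real.sqrt t := Real.sqrt_pos.2 h0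
  have hb : 0 < Real.sqrt (t - 1) := Real.sqrt_pos.2 h1
  have hA : ContDiffAt ℝ 2 Real.sqrt t := Real.contDiffAt_sqrt h0.ne'
  have hB : ContDiffAt ℝ 2 (fun s => Real.sqrt (s - 1)) t := by
    exact (Real.contDiffAt_sqrt h1.ne').comp t (contDiffAt_id.sub contDiffAt_const)
  exact (hA.mul hB).sub ((hA.add hB).log (by positivity))


noncomputable def Sfun (y : EuclideanSpace ℝ (Fin 2)) : ℝ := y 0 ^ 2 + y 1 ^ 2

noncomputable def Lmap (y : EuclideanSpace ℝ (Fin 2)) : EuclideanSpace ℝ (Fin 2) →L[ℝ] ℝ :=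
  (2 * y 0) • EuclideanSpace.proj 0 + (2 * y 1) • EuclideanSpace.proj 1

lemma proj_fderiv (i : Fin 2) (y : EuclideanSpace ℝ (Fin 2)) :
    HasFDerivAt (fun z : EuclideanSpace ℝ (Fin 2) => z i)
      (EuclideanSpace.proj (i : Fin 2) : EuclideanSpace ℝ (Fin 2) →L[ℝ] ℝ) y :=
  ((EuclideanSpace.proj (i : Fin 2) :
      EuclideanSpace ℝ (Fin 2) →L[ℝ] ℝ).hasFDerivAt (x := y)).congr_of_eventuallyEq
    (Filter.Eventually.of_forall fun z =>
      (rfl : z i = (EuclideanSpace.proj (i : Fin 2) : EuclideanSpace ℝ (Fin 2) →L[ℝ] ℝ) z))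

lemma hS (y : EuclideanSpace ℝ (Fin 2)) : HasFDerivAt Sfun (Lmap y) y := by
  have := ((proj_fderiv 0 y).mul (proj_fderiv 0 y)).add ((proj_fderiv 1 y).mul (proj_fderiv 1 y))
  have hf : Sfun = ((fun z : EuclideanSpace ℝ (Fin 2) => z 0) * fun z => z 0)
      + (fun z => z 1) * fun z => z 1 := by
    ext z; simp [Sfun, sq]
  rw [hf]
  refine this.congr_fderiv ?_
  ext z; simp [Lmap]; ring

lemma hL (y : EuclideanSpace ℝ (Fin 2)) (j : Fin 2) :
    Lmap y (EuclideanSpace.single j (1 : ℝ)) = 2 * y j := by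
  fin_cases j <;> simp [Lmap, EuclideanSpace.single_apply]

lemma hScont : ContDiff ℝ 2 Sfun := by
  have h0 : ContDiff ℝ 2 (fun z : EuclideanSpace ℝ (Fin 2) => z 0) :=
    (EuclideanSpace.proj (0 : Fin 2) : EuclideanSpace ℝ (Fin 2) →L[ℝ] ℝ).contDiff
  have h1 : ContDiff ℝ 2 (fun z : EuclideanSpace ℝ (Fin 2) => z 1) :=
    (EuclideanSpace.proj (1 : Fin 2) : EuclideanSpace ℝ (Fin 2) →L[ℝ] ℝ).contDiff
  have h : Sfun = fun y : EuclideanSpace ℝ (Fin 2) => y 0 * y 0 + y 1 * y 1 :=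
    funext fun y => by simp [Sfun, sq]
  rw [h]
  exact (h0.mul h0).add (h1.mul h1)

lemma sqrt_facts {t : ℝ} (ht : 1 < t) :
    0 < Real.sqrt t ∧ 0 < Real.sqrt (t - 1) ∧
      Real.sqrt t ^ 2 = t ∧ Real.sqrt (t - 1) ^ 2 = t - 1 :=
  ⟨Real.sqrt_pos.2 (by linarith), Real.sqrt_pos.2 (by linarith),
    Real.sq_sqrt (by linarith), Real.sq_sqrt (by linarith)⟩

lemma G1_sq {t : ℝ} (ht : 1 < t) : G1 t ^ 2 = (t - 1) / t := by
  obtain ⟨ha, hb, ha2, hb2⟩ := sqrt_facts ht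
  rw [G1, div_pow, ha2, hb2]

lemma G1_mul_G2 {t : ℝ} (ht : 1 < t) : G1 t * G2 t = 1 / (2 * t * t) := by
  obtain ⟨ha, hb, ha2, hb2⟩ := sqrt_facts ht
  rw [G1, G2]
  have ht0 : (0:ℝ) < t := by linarith
  field_simp
  linear_combination (-1 : ℝ) * ha2



/-- The determinant of the Hessian matrix `D²u(x)` of a function
`u : ℝ^n → ℝ`, i.e. the determinant of the `n × n` matrix whose `(i,j)` entry is the
second partial derivative `∂²u/∂x_i∂x_j (x)`. -/
noncomputable def hessianDet {n : ℕ} (u : EuclideanSpace ℝ (Fin n) → ℝ)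
    (x : EuclideanSpace ℝ (Fin n)) : ℝ :=
  Matrix.det (Matrix.of fun i j : Fin n =>
    iteratedFDeriv ℝ 2 u x ![EuclideanSpace.single i (1 : ℝ), EuclideanSpace.single j (1 : ℝ)])

/-- Let `u` be defined on the region `r = √(x² + y²) > 1` by
`u(x,y) = r·√(r² − 1) − ln(r + √(r² − 1))`.  Then at every point with `x² + y² > 1`,
`u` is twice continuously differentiable and `det(D²u(x,y)) = 4`. -/
theorem hessianDet_piecewise_outer_2d (u : EuclideanSpace ℝ (Fin 2) → ℝ)
    (hu : ∀ x : EuclideanSpace ℝ (Fin 2), 1 < x 0 ^ 2 + x 1 ^ 2 →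
      u x = Real.sqrt (x 0 ^ 2 + x 1 ^ 2) * Real.sqrt (x 0 ^ 2 + x 1 ^ 2 - 1)
        - Real.log (Real.sqrt (x 0 ^ 2 + x 1 ^ 2) + Real.sqrt (x 0 ^ 2 + x 1 ^ 2 - 1))) :
    ∀ x : EuclideanSpace ℝ (Fin 2), 1 < x 0 ^ 2 + x 1 ^ 2 →
      ContDiffAt ℝ 2 u x ∧ hessianDet u x = 4 := by
  intro x hx
  have hx' : 1 < Sfun x := hx
  have hopen : IsOpen {y : EuclideanSpace ℝ (Fin 2) | 1 < Sfun y} :=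
    isOpen_lt continuous_const hScont.continuous
  have hnhds : ∀ᶠ y in nhds x, 1 < Sfun y := hopen.mem_nhds hx'
  have huv : u =ᶠ[nhds x] fun y => Gfun (Sfun y) :=
    hnhds.mono fun y hy => by simpa [Gfun, Sfun] using hu y hy
  have hC : ContDiffAt ℝ 2 u x :=
    (((hGsmooth hx').comp x hScont.contDiffAt)).congr_of_eventuallyEq huv
  refine ⟨hC, ?_⟩
  have hF : ∀ y, 1 < Sfun y →
      HasFDerivAt (fun z => Gfun (Sfun z)) (G1 (Sfun y) • Lmap y) y :=
    fun y hy => (hG hy).comp_hasFDerivAt y (hS y)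
  have hfd : fderiv ℝ u =ᶠ[nhds x] fun y => G1 (Sfun y) • Lmap y := by
    filter_upwards [huv.fderiv (𝕜 := ℝ), hnhds] with y h1 h2
    rw [h1, (hF y h2).fderiv]
  have happ : ∀ j : Fin 2, (fun y => fderiv ℝ u y (EuclideanSpace.single j (1:ℝ)))
      =ᶠ[nhds x] fun y => G1 (Sfun y) * (2 * y j) := by
    intro j
    filter_upwards [hfd] with y h
    rw [h]
    simp [hL]
  have hpj : ∀ j : Fin 2, HasFDerivAt (fun y => G1 (Sfun y) * (2 * y j))
      (G1 (Sfun x) • ((2:ℝ) • (EuclideanSpace.proj j : EuclideanSpace ℝ (Fin 2) →L[ℝ] ℝ))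
        + (2 * x j) • (G2 (Sfun x) • Lmap x)) x := by
    intro j
    have h1 : HasFDerivAt (fun y => G1 (Sfun y)) (G2 (Sfun x) • Lmap x) x :=
      (hG1 hx').comp_hasFDerivAt x (hS x)
    have h2 : HasFDerivAt (fun y : EuclideanSpace ℝ (Fin 2) => 2 * y j)
        ((2:ℝ) • (EuclideanSpace.proj j : EuclideanSpace ℝ (Fin 2) →L[ℝ] ℝ)) x :=
      (proj_fderiv j x).const_mul 2
    exact h1.mul h2
  have hd2 : DifferentiableAt ℝ (fderiv ℝ u) x := by
    have := hC.fderiv_right (m := 1) (by norm_num)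
    exact this.differentiableAt (by norm_num)
  have hkey : ∀ i j : Fin 2, iteratedFDeriv ℝ 2 u x
      ![EuclideanSpace.single i (1:ℝ), EuclideanSpace.single j (1:ℝ)] =
      G1 (Sfun x) * (2 * (if j = i then 1 else 0))
        + (2 * x j) * (G2 (Sfun x) * (2 * x i)) := by
    intro i j
    rw [iteratedFDeriv_two_apply]
    have h5 : fderiv ℝ (fderiv ℝ u) x (EuclideanSpace.single i (1:ℝ))
          (EuclideanSpace.single j (1:ℝ))
        = fderiv ℝ (fun y => fderiv ℝ u y (EuclideanSpace.single j (1:ℝ))) x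
          (EuclideanSpace.single i (1:ℝ)) := by
      have hcomp := ((ContinuousLinearMap.apply ℝ ℝ (EuclideanSpace.single j (1:ℝ)) :
          (EuclideanSpace ℝ (Fin 2) →L[ℝ] ℝ) →L[ℝ] ℝ).hasFDerivAt.comp
            x hd2.hasFDerivAt).fderiv
      calc fderiv ℝ (fderiv ℝ u) x (EuclideanSpace.single i (1:ℝ))
            (EuclideanSpace.single j (1:ℝ))
          = ((ContinuousLinearMap.apply ℝ ℝ (EuclideanSpace.single j (1:ℝ))).comp
              (fderiv ℝ (fderiv ℝ u) x)) (EuclideanSpace.single i (1:ℝ)) := rfl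
        _ = fderiv ℝ ((ContinuousLinearMap.apply ℝ ℝ (EuclideanSpace.single j (1:ℝ)))
              ∘ (fderiv ℝ u)) x (EuclideanSpace.single i (1:ℝ)) := by rw [hcomp]
        _ = fderiv ℝ (fun y => fderiv ℝ u y (EuclideanSpace.single j (1:ℝ))) x
              (EuclideanSpace.single i (1:ℝ)) := rfl
    simp only [Matrix.cons_val_zero, Matrix.cons_val_one, Matrix.head_cons]
    rw [h5, (happ j).fderiv_eq, (hpj j).fderiv]
    simp [hL, EuclideanSpace.single_apply]
  rw [hessianDet, Matrix.det_fin_two]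
  simp only [Matrix.of_apply]
  rw [hkey 0 0, hkey 0 1, hkey 1 0, hkey 1 1]
  norm_num
  have final : 4 * (G1 (Sfun x)) ^ 2
      + 8 * (G1 (Sfun x) * G2 (Sfun x)) * (x 0 ^ 2 + x 1 ^ 2) = 4 := by
    rw [G1_sq hx', G1_mul_G2 hx', show x 0 ^ 2 + x 1 ^ 2 = Sfun x from rfl]
    have hs0 : Sfun x ≠ 0 := by positivity
    field_simp
    ring
  linear_combination final
end

section
/- Define u : ℝ² → ℝ by u(x,y) = 0 if r ≤ 1 and u(x,y) = r·√(r² − 1) − ln(r + √(r² − 1)) if r > 1, where r = √(x² + y²). Then u is continuously differentiable on ℝ², u is convex on ℝ², and det(D²u(x,y)) = 0 at every point with x² + y² < 1. -/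
open Real

noncomputable def Fr (s : ℝ) : ℝ :=
  Real.sqrt s * Real.sqrt (s - 1) - Real.log (Real.sqrt s + Real.sqrt (s - 1))

noncomputable def hr (s : ℝ) : ℝ := if s ≤ 1 then 0 else Fr s

noncomputable def hr' (s : ℝ) : ℝ := if s ≤ 1 then 0 else Real.sqrt (s - 1) / Real.sqrt s

lemma Fr_one : Fr 1 = 0 := by
  simp [Fr]

lemma Fr_hasDeriv {s : ℝ} (hs : 1 < s) :
    HasDerivAt Fr (Real.sqrt (s - 1) / Real.sqrt s) s := by
  have h0 : (0:ℝ) < s := by linarith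
  have h1 : (0:ℝ) < s - 1 := by linarith
  have hs0 : 0 < Real.sqrt s := Real.sqrt_pos.2 h0
  have hs1 : 0 < Real.sqrt (s - 1) := Real.sqrt_pos.2 h1
  have hA : HasDerivAt Real.sqrt (1 / (2 * Real.sqrt s)) s := Real.hasDerivAt_sqrt h0.ne'
  have hB : HasDerivAt (fun t => Real.sqrt (t - 1)) (1 / (2 * Real.sqrt (s - 1))) s := by
    have := (Real.hasDerivAt_sqrt h1.ne').comp s ((hasDerivAt_id s).sub_const 1)
    simpa [Function.comp_def] using this
  have hprod := hA.mul hB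
  have hsum := hA.add hB
  have harg : 0 < Real.sqrt s + Real.sqrt (s - 1) := by positivity
  have hlog := (Real.hasDerivAt_log harg.ne').comp s hsum
  have hmain := hprod.sub hlog
  refine hmain.congr_deriv ?_
  have e1 : Real.sqrt s ^ 2 = s := Real.sq_sqrt h0.le
  have e2 : Real.sqrt (s - 1) ^ 2 = s - 1 := Real.sq_sqrt h1.le
  field_simp
  linear_combination (Real.sqrt s + Real.sqrt (s-1)) * e1
    - (Real.sqrt s + Real.sqrt (s-1)) * e2

lemma hr_eq_max (t : ℝ) : hr t = Fr (max t 1) := by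
  by_cases h : t ≤ 1
  · rw [hr, if_pos h, max_eq_right h, Fr_one]
  · rw [hr, if_neg h, max_eq_left (le_of_not_ge h)]

lemma Fr_contOn : ContinuousOn Fr (Set.Ici (1:ℝ)) := by
  intro s hs
  have hs1 : (1:ℝ) ≤ s := hs
  have harg : (0:ℝ) < Real.sqrt s + Real.sqrt (s - 1) := by
    have : (1:ℝ) ≤ Real.sqrt s := by
      rw [show (1:ℝ) = Real.sqrt 1 by simp]
      exact Real.sqrt_le_sqrt hs1
    have := Real.sqrt_nonneg (s - 1)
    linarith
  have c1 : ContinuousAt (fun t => Real.sqrt t) s := Real.continuous_sqrt.continuousAt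
  have c2 : ContinuousAt (fun t => Real.sqrt (t - 1)) s :=
    (Real.continuous_sqrt.comp (continuous_id.sub continuous_const)).continuousAt
  have c3 : ContinuousAt (fun t => Real.log (Real.sqrt t + Real.sqrt (t - 1))) s :=
    (c1.add c2).log harg.ne'
  exact ((c1.mul c2).sub c3).continuousWithinAt

lemma hr_cont : Continuous hr := by
  have : Continuous fun t => Fr (max t 1) :=
    Fr_contOn.comp_continuous (continuous_id.max continuous_const)
      (fun t => le_max_right t 1)
  simpa [← hr_eq_max] using this

lemma hr'_cont : Continuous hr' := by
  have hG : ContinuousOn (fun s => Real.sqrt (s - 1) / Real.sqrt s) (Set.Ici (1:ℝ)) := by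
    intro s hs
    have hs1 : (1:ℝ) ≤ s := hs
    have h0 : (0:ℝ) < Real.sqrt s := Real.sqrt_pos.2 (by linarith)
    exact (((Real.continuous_sqrt.comp (continuous_id.sub continuous_const)).continuousAt).div
      Real.continuous_sqrt.continuousAt h0.ne').continuousWithinAt
  have : Continuous fun t => Real.sqrt (max t 1 - 1) / Real.sqrt (max t 1) :=
    hG.comp_continuous (continuous_id.max continuous_const) (fun t => le_max_right t 1)
  have heq : ∀ t, hr' t = Real.sqrt (max t 1 - 1) / Real.sqrt (max t 1) := by
    intro t
    by_cases h : t ≤ 1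
    · rw [hr', if_pos h, max_eq_right h]; simp
    · rw [hr', if_neg h, max_eq_left (le_of_not_ge h)]
  simpa [← heq] using this

lemma hr_hasDeriv_ne (y : ℝ) (hy : y ≠ 1) : HasDerivAt hr (hr' y) y := by
  rcases lt_or_gt_of_ne hy with h | h
  · have hev : hr =ᶠ[nhds y] (fun _ => 0) := by
      filter_upwards [Iio_mem_nhds h] with t ht
      rw [hr, if_pos (le_of_lt ht)]
    rw [hr', if_pos h.le]
    exact (hasDerivAt_const y (0:ℝ)).congr_of_eventuallyEq hev
  · have hev : hr =ᶠ[nhds y] Fr := by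
      filter_upwards [Ioi_mem_nhds h] with t ht
      rw [hr, if_neg (not_le.2 ht)]
    rw [hr', if_neg (not_le.2 h)]
    exact (Fr_hasDeriv h).congr_of_eventuallyEq hev

lemma hr_hasDeriv (s : ℝ) : HasDerivAt hr (hr' s) s := by
  rcases eq_or_ne s 1 with rfl | hs
  · exact hasDerivAt_of_hasDerivAt_of_ne hr_hasDeriv_ne
      hr_cont.continuousAt hr'_cont.continuousAt
  · exact hr_hasDeriv_ne s hs

lemma hr_diff : Differentiable ℝ hr := fun s => (hr_hasDeriv s).differentiableAt

lemma hr_deriv : deriv hr = hr' := funext fun s => (hr_hasDeriv s).deriv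

lemma hr_contDiff : ContDiff ℝ 1 hr :=
  contDiff_one_iff_deriv.2 ⟨hr_diff, hr_deriv ▸ hr'_cont⟩

lemma hr'_mono : Monotone hr' := by
  intro a b hab
  rw [hr', hr']
  by_cases hb : b ≤ 1
  · rw [if_pos (hab.trans hb), if_pos hb]
  · rw [if_neg hb]
    push_neg at hb
    have hb0 : (0:ℝ) < Real.sqrt b := Real.sqrt_pos.2 (by linarith)
    by_cases ha : a ≤ 1
    · rw [if_pos ha]
      positivity
    · rw [if_neg ha]
      push_neg at ha
      have ha0 : (0:ℝ) < Real.sqrt a := Real.sqrt_pos.2 (by linarith)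
      rw [div_le_div_iff₀ ha0 hb0, ← Real.sqrt_mul (by linarith : (0:ℝ) ≤ a - 1),
        ← Real.sqrt_mul (by linarith : (0:ℝ) ≤ b - 1)]
      exact Real.sqrt_le_sqrt (by nlinarith)

lemma hr'_nonneg (s : ℝ) : 0 ≤ hr' s := by
  rw [hr']
  split
  · exact le_refl 0
  · positivity

lemma hr_mono : Monotone hr :=
  monotone_of_deriv_nonneg hr_diff (fun s => hr_deriv ▸ hr'_nonneg s)

lemma hr_convex : ConvexOn ℝ Set.univ hr :=
  Monotone.convexOn_univ_of_deriv hr_diff (hr_deriv ▸ hr'_mono)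





/-- Define `u(x,y) = 0` if `r ≤ 1` and `u(x,y) = r·√(r² − 1) − ln(r + √(r² − 1))` if
`r > 1`, where `r = √(x² + y²)`.  Then `u` is continuously differentiable on `ℝ²`,
`u` is convex on `ℝ²`, and `det(D²u(x,y)) = 0` at every point with `x² + y² < 1`. -/
theorem piecewise_solution_2d (u : EuclideanSpace ℝ (Fin 2) → ℝ)
    (hu : ∀ x : EuclideanSpace ℝ (Fin 2),
      u x = if Real.sqrt (x 0 ^ 2 + x 1 ^ 2) ≤ 1 then 0 else
        Real.sqrt (x 0 ^ 2 + x 1 ^ 2) * Real.sqrt (x 0 ^ 2 + x 1 ^ 2 - 1)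
          - Real.log (Real.sqrt (x 0 ^ 2 + x 1 ^ 2) + Real.sqrt (x 0 ^ 2 + x 1 ^ 2 - 1))) :
    ContDiff ℝ 1 u ∧ ConvexOn ℝ Set.univ u ∧
    ∀ x : EuclideanSpace ℝ (Fin 2), x 0 ^ 2 + x 1 ^ 2 < 1 → hessianDet u x = 0 := by
  have hcond : ∀ x : EuclideanSpace ℝ (Fin 2),
      (Real.sqrt (x 0 ^ 2 + x 1 ^ 2) ≤ 1) ↔ (x 0 ^ 2 + x 1 ^ 2 ≤ 1) := by
    intro x
    have h0 : (0:ℝ) ≤ x 0 ^ 2 + x 1 ^ 2 := by positivity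
    constructor
    · intro h
      nlinarith [Real.sq_sqrt h0, Real.sqrt_nonneg (x 0 ^ 2 + x 1 ^ 2)]
    · intro h
      rw [show (1:ℝ) = Real.sqrt 1 by simp]
      exact Real.sqrt_le_sqrt h
  have hueq : u = fun x : EuclideanSpace ℝ (Fin 2) => hr (x 0 ^ 2 + x 1 ^ 2) := by
    funext x
    rw [hu x, hr]
    by_cases h : x 0 ^ 2 + x 1 ^ 2 ≤ 1
    · rw [if_pos ((hcond x).2 h), if_pos h]
    · rw [if_neg (fun hc => h ((hcond x).1 hc)), if_neg h, Fr]
  have hQ1 : ContDiff ℝ 1 (fun x : EuclideanSpace ℝ (Fin 2) => x 0) :=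
    (EuclideanSpace.proj (0 : Fin 2) : EuclideanSpace ℝ (Fin 2) →L[ℝ] ℝ).contDiff
  have hQ2 : ContDiff ℝ 1 (fun x : EuclideanSpace ℝ (Fin 2) => x 1) :=
    (EuclideanSpace.proj (1 : Fin 2) : EuclideanSpace ℝ (Fin 2) →L[ℝ] ℝ).contDiff
  have hQcd : ContDiff ℝ 1 (fun x : EuclideanSpace ℝ (Fin 2) => x 0 ^ 2 + x 1 ^ 2) :=
    (hQ1.pow 2).add (hQ2.pow 2)
  refine ⟨?_, ?_, ?_⟩
  · rw [hueq]
    exact hr_contDiff.comp hQcd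
  · rw [hueq]
    have hQconv : ConvexOn ℝ Set.univ (fun x : EuclideanSpace ℝ (Fin 2) => x 0 ^ 2 + x 1 ^ 2) := by
      have hsq : ConvexOn ℝ Set.univ (fun t : ℝ => t ^ 2) := Even.convexOn_pow even_two
      have c0 : ConvexOn ℝ Set.univ (fun x : EuclideanSpace ℝ (Fin 2) => x 0 ^ 2) := by
        have := hsq.comp_affineMap ((EuclideanSpace.projₗ (𝕜 := ℝ) (ι := Fin 2) 0).toAffineMap)
        simpa [Function.comp_def] using this
      have c1 : ConvexOn ℝ Set.univ (fun x : EuclideanSpace ℝ (Fin 2) => x 1 ^ 2) := by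
        have := hsq.comp_affineMap ((EuclideanSpace.projₗ (𝕜 := ℝ) (ι := Fin 2) 1).toAffineMap)
        simpa [Function.comp_def] using this
      exact c0.add c1
    refine ⟨convex_univ, fun x _ y _ a b ha hb hab => ?_⟩
    calc hr ((a • x + b • y) 0 ^ 2 + (a • x + b • y) 1 ^ 2)
        ≤ hr (a * (x 0 ^ 2 + x 1 ^ 2) + b * (y 0 ^ 2 + y 1 ^ 2)) :=
          hr_mono (hQconv.2 (Set.mem_univ x) (Set.mem_univ y) ha hb hab)
      _ ≤ a * hr (x 0 ^ 2 + x 1 ^ 2) + b * hr (y 0 ^ 2 + y 1 ^ 2) := by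
          have := hr_convex.2 (Set.mem_univ (x 0 ^ 2 + x 1 ^ 2))
            (Set.mem_univ (y 0 ^ 2 + y 1 ^ 2)) ha hb hab
          simpa using this
  · intro x hx
    have hopen : IsOpen {y : EuclideanSpace ℝ (Fin 2) | y 0 ^ 2 + y 1 ^ 2 < 1} :=
      isOpen_lt hQcd.continuous continuous_const
    have hev : u =ᶠ[nhds x] (fun _ => (0:ℝ)) := by
      filter_upwards [hopen.mem_nhds hx] with y hy
      rw [hu y, if_pos ((hcond y).2 (le_of_lt hy))]
    have hux : u x = 0 := by rw [hu x, if_pos ((hcond x).2 hx.le)]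
    have h2 : iteratedFDeriv ℝ 2 u x = iteratedFDeriv ℝ 2 (fun _ => (0:ℝ)) x := by
      have := Filter.EventuallyEq.iteratedFDerivWithin_eq (𝕜 := ℝ)
        (s := Set.univ) (hev.filter_mono nhdsWithin_le_nhds) hux 2
      rwa [iteratedFDerivWithin_univ, iteratedFDerivWithin_univ] at this
    rw [hessianDet, h2, iteratedFDeriv_zero_fun]
    simp [Matrix.det_fin_two]
end
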